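/- arXiv:1809.01742 — 2 statements merged into one kernel-verified Lean document; each statement's English description precedes it below -/
import Mathlib

section
/- Let (X,𝒜,μ) be a σ-finite measure space, let γ>0, let w ∈ L²(μ) with w ≥ 0 a.e., and let A : X → ℝ be measurable with 0 ≤ A ≤ γ² a.e. Assume that ‖w‖_{L²(μ)} ≤ γ^{−2} ‖(γ² − A) w‖_{L²(μ)}, and that for every κ > 0 there exists ζ(κ) > 0 such that A ≥ ζ(κ) a.e. on the set {w ≥ κ}. Then w = 0 μ-a.e. -/
open MeasureTheory
open scoped ENNReal

/-!
Since `0 ≤ A ≤ γ²`, pointwise `|(γ² - A) w| ≤ γ² |w|`, while the hypothesis puts the `L²` norms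
in the reverse order. Domination plus equality of `L²` norms forces `|(γ² - A) w| = γ² |w|` a.e.,
i.e. `A w = 0` a.e. On `{w ≥ κ}` we have `A ≥ ζ(κ) > 0`, so that set is null for every `κ > 0`.
-/

section
variable {α E F : Type*} [MeasurableSpace α] {μ : Measure α}

theorem ae_le_of_forall_ae_lt {f : α → ℝ} {c : ℝ} (h : ∀ ε > 0, ∀ᵐ x ∂μ, f x < c + ε) :
    ∀ᵐ x ∂μ, f x ≤ c := by
  have hn : ∀ᵐ x ∂μ, ∀ n : ℕ, f x < c + 1 / (n + 1) :=
    ae_all_iff.2 fun n ↦ h _ Nat.one_div_pos_of_nat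
  filter_upwards [hn] with x hx
  exact le_of_forall_pos_lt_add fun ε hε ↦
    let ⟨n, hnε⟩ := exists_nat_one_div_lt hε
    (hx n).trans (by linarith)

variable [NormedAddCommGroup E] [NormedAddCommGroup F]

theorem enorm_ae_eq_of_eLpNorm_le {f : α → E} {g : α → F} {p : ℝ≥0∞} (hp0 : p ≠ 0)
    (hp : p ≠ ∞) (hfg : ∀ᵐ x ∂μ, ‖f x‖ₑ ≤ ‖g x‖ₑ) (hg : MemLp g p μ)
    (hgf : eLpNorm g p μ ≤ eLpNorm f p μ) : ∀ᵐ x ∂μ, ‖f x‖ₑ = ‖g x‖ₑ := by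
  have hq : 0 < p.toReal := ENNReal.toReal_pos hp0 hp
  have hpow : ∀ᵐ x ∂μ, ‖f x‖ₑ ^ p.toReal ≤ ‖g x‖ₑ ^ p.toReal := by
    filter_upwards [hfg] with x hx
    exact ENNReal.rpow_le_rpow hx hq.le
  have hg_fin : ∫⁻ x, ‖g x‖ₑ ^ p.toReal ∂μ ≠ ∞ :=
    (lintegral_rpow_enorm_lt_top_of_eLpNorm_lt_top hp0 hp hg.eLpNorm_lt_top).ne
  have hgf' : ∫⁻ x, ‖g x‖ₑ ^ p.toReal ∂μ ≤ ∫⁻ x, ‖f x‖ₑ ^ p.toReal ∂μ := by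
    rwa [eLpNorm_eq_lintegral_rpow_enorm_toReal hp0 hp,
      eLpNorm_eq_lintegral_rpow_enorm_toReal hp0 hp,
      ENNReal.rpow_le_rpow_iff (one_div_pos.2 hq)] at hgf
  have heq := ae_eq_of_ae_le_of_lintegral_le hpow (ne_top_of_le_ne_top hg_fin
    (lintegral_mono_ae hpow)) (hg.1.enorm.pow_const _) hgf'
  filter_upwards [heq] with x hx
  exact ENNReal.rpow_left_injective hq.ne' hx

end

theorem stmt_10_general {X : Type*} [MeasurableSpace X] (μ : Measure X)
    (γ : ℝ) (hγ : 0 < γ) (w A : X → ℝ)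
    (hw : MemLp w 2 μ) (hwnn : ∀ᵐ x ∂μ, 0 ≤ w x)
    (hAbd : ∀ᵐ x ∂μ, 0 ≤ A x ∧ A x ≤ γ ^ 2)
    (hnorm : eLpNorm w 2 μ
      ≤ ENNReal.ofReal (γ ^ 2)⁻¹ * eLpNorm (fun x => (γ ^ 2 - A x) * w x) 2 μ)
    (hζ : ∀ κ : ℝ, 0 < κ → ∃ ζ : ℝ, 0 < ζ ∧ ∀ᵐ x ∂μ, κ ≤ w x → ζ ≤ A x) :
    w =ᵐ[μ] 0 := by
  have hγ2 : 0 < γ ^ 2 := by positivity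
  have hscaled : eLpNorm (γ ^ 2 • w) 2 μ ≤ eLpNorm (fun x => (γ ^ 2 - A x) * w x) 2 μ := by
    calc eLpNorm (γ ^ 2 • w) 2 μ = ENNReal.ofReal (γ ^ 2) * eLpNorm w 2 μ := by
          rw [eLpNorm_const_smul, Real.enorm_of_nonneg hγ2.le]
      _ ≤ ENNReal.ofReal (γ ^ 2) * (ENNReal.ofReal (γ ^ 2)⁻¹ *
            eLpNorm (fun x => (γ ^ 2 - A x) * w x) 2 μ) := by gcongr
      _ = _ := by
          rw [← mul_assoc, ← ENNReal.ofReal_mul hγ2.le, mul_inv_cancel₀ hγ2.ne',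
            ENNReal.ofReal_one, one_mul]
  have hdom : ∀ᵐ x ∂μ, ‖(γ ^ 2 - A x) * w x‖ₑ ≤ ‖(γ ^ 2 • w) x‖ₑ := by
    filter_upwards [hAbd] with x ⟨hA0, hAγ⟩
    simp only [Pi.smul_apply, smul_eq_mul, enorm_mul]
    gcongr
    rw [Real.enorm_of_nonneg (by linarith), Real.enorm_of_nonneg hγ2.le]
    exact ENNReal.ofReal_le_ofReal (by linarith)
  have heq := enorm_ae_eq_of_eLpNorm_le two_ne_zero ENNReal.ofNat_ne_top hdom
    (hw.const_smul _) hscaled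
  have hsmall : ∀ κ > 0, ∀ᵐ x ∂μ, w x < 0 + κ := by
    intro κ hκ
    obtain ⟨ζ, hζ0, hζA⟩ := hζ κ hκ
    filter_upwards [hζA, heq, hAbd] with x hxA hx ⟨hA0, hAγ⟩
    by_contra! hκw
    have hw0 : 0 < w x := by linarith
    simp only [Pi.smul_apply, smul_eq_mul, ← ofReal_norm, norm_mul] at hx
    rw [ENNReal.ofReal_eq_ofReal_iff (by positivity) (by positivity),
      Real.norm_of_nonneg (by linarith : 0 ≤ γ ^ 2 - A x), Real.norm_of_nonneg hγ2.le,
      Real.norm_of_nonneg hw0.le] at hx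
    nlinarith [mul_pos (hζ0.trans_le (hxA (by linarith))) hw0]
  filter_upwards [ae_le_of_forall_ae_lt hsmall, hwnn] with x hx hx0
  exact le_antisymm hx hx0

/-- If `w ∈ L²(μ)` is nonnegative, `0 ≤ A ≤ γ²` a.e.,
`‖w‖_{L²} ≤ γ^{-2} ‖(γ² - A) w‖_{L²}`, and for every `κ > 0` the coefficient `A`
is bounded below by some `ζ(κ) > 0` a.e. on `{w ≥ κ}`, then `w = 0` a.e. -/
theorem stmt_10 {X : Type*} [MeasurableSpace X] (μ : Measure X) [SigmaFinite μ]
    (γ : ℝ) (hγ : 0 < γ) (w A : X → ℝ)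
    (hw : MemLp w 2 μ) (hwnn : ∀ᵐ x ∂μ, 0 ≤ w x)
    (hAmeas : Measurable A)
    (hAbd : ∀ᵐ x ∂μ, 0 ≤ A x ∧ A x ≤ γ ^ 2)
    (hnorm : eLpNorm w 2 μ
      ≤ ENNReal.ofReal (γ ^ 2)⁻¹ * eLpNorm (fun x => (γ ^ 2 - A x) * w x) 2 μ)
    (hζ : ∀ κ : ℝ, 0 < κ → ∃ ζ : ℝ, 0 < ζ ∧ ∀ᵐ x ∂μ, κ ≤ w x → ζ ≤ A x) :
    w =ᵐ[μ] 0 :=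
  stmt_10_general μ γ hγ w A hw hwnn hAbd hnorm hζ
end

section
/- Let d≥1, T>0, c>0 and γ>0. Let ρ₀ : ℝ^d → [0,∞) be measurable and suppose that for every R>0 there exists μ_R>0 such that ρ₀(z) ≥ μ_R for a.e. z with |z| ≤ R. Let ρ : (0,T]×ℝ^d → [0,∞) satisfy ρ(t,x) ≥ c ∫_{ℝ^d} G^γ_t(x−x₀) ρ₀(x₀) dx₀ for all t ∈ (0,T] and x ∈ ℝ^d. Then for every R>0 there exists m_R>0 such that ρ(t,x) ≥ m_R for all t ∈ (0,T] and all x with |x| ≤ R. -/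
open MeasureTheory Real Set Filter

noncomputable section

abbrev Euc (d : ℕ) : Type := EuclideanSpace ℝ (Fin d)

/-- The `i`-th standard basis vector of `ℝ^d`. -/
def eVec (d : ℕ) (i : Fin d) : Euc d := EuclideanSpace.single i 1

/-- Lebesgue measure on the space-time strip `(0,T) × ℝ^d`. -/
def stMeasure (d : ℕ) (T : ℝ) : Measure (ℝ × Euc d) :=
  (volume.restrict (Set.Ioo 0 T)).prod volume

/-- A test function in `C_c^∞((0,T) × ℝ^d)`. -/
def IsTestST (d : ℕ) (T : ℝ) (φ : ℝ × Euc d → ℝ) : Prop :=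
  ContDiff ℝ (⊤ : ℕ∞) φ ∧ HasCompactSupport φ ∧
    tsupport φ ⊆ Set.Ioo 0 T ×ˢ (Set.univ : Set (Euc d))

/-- `u ∈ L²((0,T);H¹(ℝ^d))` with weak spatial gradient `du`. -/
def HasWeakGradient (d : ℕ) (T : ℝ) (u : ℝ → Euc d → ℝ) (du : ℝ → Euc d → Euc d) : Prop :=
  MemLp (fun p : ℝ × Euc d => u p.1 p.2) 2 (stMeasure d T) ∧
  MemLp (fun p : ℝ × Euc d => du p.1 p.2) 2 (stMeasure d T) ∧
  ∀ φ : ℝ × Euc d → ℝ, IsTestST d T φ → ∀ i : Fin d,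
    ∫ p, u p.1 p.2 * fderiv ℝ φ p (0, eVec d i) ∂(stMeasure d T)
      = - ∫ p, du p.1 p.2 i * φ p ∂(stMeasure d T)

/-- `t ↦ u(t)` is continuous from `[0,T]` to `L²(ℝ^d)`. -/
def L2ContinuousOn (d : ℕ) (T : ℝ) (u : ℝ → Euc d → ℝ) : Prop :=
  (∀ t ∈ Set.Icc (0:ℝ) T, MemLp (u t) 2 (volume : Measure (Euc d))) ∧
  ∀ t₀ ∈ Set.Icc (0:ℝ) T,
    Tendsto (fun t => eLpNorm (fun x => u t x - u t₀ x) 2 (volume : Measure (Euc d)))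
      (nhdsWithin t₀ (Set.Icc 0 T)) (nhds 0)

/-- Weak solution of `∂ₜ u = ½ div(a ∇u)` with initial datum `u₀`,
in `C([0,T];L²) ∩ L²((0,T);H¹)`, with weak spatial gradient `du`. -/
structure IsWeakSolDiv (d : ℕ) (T : ℝ) (a : ℝ → Euc d → ℝ) (u0 : Euc d → ℝ)
    (u : ℝ → Euc d → ℝ) (du : ℝ → Euc d → Euc d) : Prop where
  contL2 : L2ContinuousOn d T u
  grad : HasWeakGradient d T u du
  weakEq : ∀ T₀ ∈ Set.Icc (0:ℝ) T, ∀ f : ℝ × Euc d → ℝ,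
    ContDiff ℝ (⊤ : ℕ∞) f → HasCompactSupport f →
    (∫ x, u T₀ x * f (T₀, x)) - (∫ x, u0 x * f (0, x))
      = ∫ p in Set.Ioc 0 T₀ ×ˢ (Set.univ : Set (Euc d)),
          (u p.1 p.2 * fderiv ℝ f p (1, 0)
            - (1/2) * a p.1 p.2 * ∑ i, du p.1 p.2 i * fderiv ℝ f p (0, eVec d i))

/-- Assumption (A0): `u₀` is a probability density in `L¹ ∩ L^∞` with finite second moment. -/
def AssumpA0 (d : ℕ) (u0 : Euc d → ℝ) : Prop :=
  Measurable u0 ∧ (∀ x, 0 ≤ u0 x) ∧ (∫ x, u0 x = 1) ∧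
    Integrable u0 (volume : Measure (Euc d)) ∧
    MemLp u0 ⊤ (volume : Measure (Euc d)) ∧
    Integrable (fun x : Euc d => ‖x‖^2 * u0 x) (volume : Measure (Euc d))

/-- Assumption (A1) together with the definition of `α`: `σ` is `C¹` on `[0,∞)`
and `α(r) = (σ²(r) r)'` there. -/
def AssumpA1 (σ α : ℝ → ℝ) : Prop :=
  ContDiffOn ℝ 1 σ (Set.Ici 0) ∧
  ∀ r ∈ Set.Ici (0:ℝ), HasDerivWithinAt (fun s => σ s ^ 2 * s) (α r) (Set.Ici 0) r

/-- The Gaussian kernel `G^γ_t(x) = (2πγ²t)^{-d/2} exp(-|x|²/(2γ²t))` on `ℝ^d`. -/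
def gaussK (d : ℕ) (γ t : ℝ) (x : Euc d) : ℝ :=
  (2 * π * γ ^ 2 * t) ^ (-(d : ℝ) / 2) * Real.exp (-‖x‖ ^ 2 / (2 * γ ^ 2 * t))

/-!
On the ball of radius `γ √t` around `x` the kernel `G^γ_t(x - ·)` is at least
`e^{-1/2} (2πγ²t)^{-d/2}`, and that ball has volume `(γ √t)^d |B₁|`. The powers of `t` cancel,
so the kernel puts a mass bounded below independently of `t` on this ball. For `‖x‖ ≤ R` and
`t ≤ T` the ball lies in `B(0, R + γ √T)`, where `ρ₀` is bounded below by a positive constant.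
-/

lemma gaussK_nonneg (d : ℕ) {γ t : ℝ} (ht : 0 ≤ t) (z : Euc d) : 0 ≤ gaussK d γ t z := by
  unfold gaussK
  positivity

lemma rpow_neg_half_mul_pow_sqrt (d : ℕ) {γ t : ℝ} (hγ : 0 < γ) (ht : 0 < t) :
    (2 * π * γ ^ 2 * t) ^ (-(d : ℝ) / 2) * (γ * √t) ^ d = (2 * π) ^ (-(d : ℝ) / 2) := by
  have hb : 0 < γ ^ 2 * t := by positivity
  have hscale : (γ * √t) ^ d = (γ ^ 2 * t) ^ ((d : ℝ) / 2) := by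
    have hsqrt : γ * √t = √(γ ^ 2 * t) := by
      rw [Real.sqrt_mul (sq_nonneg γ), Real.sqrt_sq hγ.le]
    rw [hsqrt, Real.sqrt_eq_rpow, ← Real.rpow_mul_natCast hb.le]
    ring_nf
  rw [hscale, mul_assoc (2 * π), Real.mul_rpow (by positivity) hb.le, mul_assoc,
    ← Real.rpow_add hb, neg_div, neg_add_cancel, Real.rpow_zero, mul_one]

lemma gaussK_ge_of_norm_le (d : ℕ) {γ t : ℝ} (hγ : 0 < γ) (ht : 0 < t) {z : Euc d}
    (hz : ‖z‖ ≤ γ * √t) :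
    (2 * π * γ ^ 2 * t) ^ (-(d : ℝ) / 2) * exp (-1 / 2) ≤ gaussK d γ t z := by
  have hsq : ‖z‖ ^ 2 ≤ γ ^ 2 * t := by
    simpa [mul_pow, Real.sq_sqrt ht.le] using pow_le_pow_left₀ (norm_nonneg z) hz 2
  unfold gaussK
  gcongr ?_ * exp ?_
  rw [le_div_iff₀ (by positivity)]
  linarith

def gaussBallMass (d : ℕ) : ℝ :=
  exp (-1 / 2) * (2 * π) ^ (-(d : ℝ) / 2) * (volume (Metric.ball (0 : Euc d) 1)).toReal

lemma gaussBallMass_pos (d : ℕ) : 0 < gaussBallMass d := by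
  have hV : 0 < (volume (Metric.ball (0 : Euc d) 1)).toReal :=
    ENNReal.toReal_pos (Metric.measure_ball_pos _ _ one_pos).ne' measure_ball_lt_top.ne
  unfold gaussBallMass
  positivity

lemma ofReal_gaussBallMass_le_setLIntegral_gaussK (d : ℕ) {γ t : ℝ} (hγ : 0 < γ) (ht : 0 < t)
    (x : Euc d) :
    ENNReal.ofReal (gaussBallMass d)
      ≤ ∫⁻ y in Metric.ball x (γ * √t), ENNReal.ofReal (gaussK d γ t (x - y)) := by
  set r := γ * √t
  have hr : 0 < r := by positivity
  set K := (2 * π * γ ^ 2 * t) ^ (-(d : ℝ) / 2) * exp (-1 / 2)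
  have hmass : gaussBallMass d = K * r ^ d * (volume (Metric.ball (0 : Euc d) 1)).toReal := by
    rw [gaussBallMass, ← rpow_neg_half_mul_pow_sqrt d hγ ht]
    ring
  have hK : ∀ y ∈ Metric.ball x r, ENNReal.ofReal K ≤ ENNReal.ofReal (gaussK d γ t (x - y)) :=
    fun y hy => ENNReal.ofReal_le_ofReal <| gaussK_ge_of_norm_le d hγ ht <| by
      rw [← dist_eq_norm, dist_comm]
      exact (Metric.mem_ball.1 hy).le
  calc ENNReal.ofReal (gaussBallMass d)
      = ENNReal.ofReal K * volume (Metric.ball x r) := by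
        rw [Measure.addHaar_ball_of_pos _ _ hr, finrank_euclideanSpace_fin, hmass,
          ENNReal.ofReal_mul (by positivity), ENNReal.ofReal_mul (by positivity),
          ENNReal.ofReal_toReal measure_ball_lt_top.ne, mul_assoc]
    _ = ∫⁻ _ in Metric.ball x r, ENNReal.ofReal K := (setLIntegral_const _ _).symm
    _ ≤ _ := setLIntegral_mono' measurableSet_ball hK

lemma ofReal_mul_gaussBallMass_le_lintegral_gaussK_mul (d : ℕ) {γ t : ℝ} (hγ : 0 < γ)
    (ht : 0 < t) {f : Euc d → ℝ} {μ : ℝ} (hμ : 0 ≤ μ) {x : Euc d}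
    (hf : ∀ᵐ y ∂(volume : Measure (Euc d)), y ∈ Metric.ball x (γ * √t) → μ ≤ f y) :
    ENNReal.ofReal (μ * gaussBallMass d)
      ≤ ∫⁻ y, ENNReal.ofReal (gaussK d γ t (x - y) * f y) := by
  calc ENNReal.ofReal (μ * gaussBallMass d)
      ≤ ENNReal.ofReal μ
          * ∫⁻ y in Metric.ball x (γ * √t), ENNReal.ofReal (gaussK d γ t (x - y)) := by
        rw [ENNReal.ofReal_mul hμ]
        gcongr
        exact ofReal_gaussBallMass_le_setLIntegral_gaussK d hγ ht x
    _ = ∫⁻ y in Metric.ball x (γ * √t), ENNReal.ofReal (gaussK d γ t (x - y) * μ) := by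
        rw [← lintegral_const_mul' _ _ ENNReal.ofReal_ne_top]
        simp_rw [← ENNReal.ofReal_mul hμ, mul_comm μ]
    _ ≤ ∫⁻ y in Metric.ball x (γ * √t), ENNReal.ofReal (gaussK d γ t (x - y) * f y) :=
        setLIntegral_mono_ae' measurableSet_ball <| hf.mono fun y hy hyB =>
          ENNReal.ofReal_le_ofReal <| mul_le_mul_of_nonneg_left (hy hyB) (gaussK_nonneg d ht.le _)
    _ ≤ _ := setLIntegral_le_lintegral _ _

theorem stmt_14_general (d : ℕ) (T c γ : ℝ)
    (hc : 0 < c) (hγ : 0 < γ)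
    (ρ₀ : Euc d → ℝ)
    (hρ₀low : ∀ R : ℝ, 0 < R → ∃ μR : ℝ, 0 < μR ∧
      ∀ᵐ z ∂(volume : Measure (Euc d)), ‖z‖ ≤ R → μR ≤ ρ₀ z)
    (ρ : ℝ → Euc d → ℝ)
    (hρlow : ∀ t ∈ Set.Ioc (0:ℝ) T, ∀ x : Euc d,
      ENNReal.ofReal c * ∫⁻ y, ENNReal.ofReal (gaussK d γ t (x - y) * ρ₀ y)
        ≤ ENNReal.ofReal (ρ t x)) :
    ∀ R : ℝ, 0 < R → ∃ mR : ℝ, 0 < mR ∧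
      ∀ t ∈ Set.Ioc (0:ℝ) T, ∀ x : Euc d, ‖x‖ ≤ R → mR ≤ ρ t x := by
  intro R hR
  obtain ⟨μ, hμ, hρ₀μ⟩ := hρ₀low (R + γ * √T) (by positivity)
  have hmR : 0 < c * (μ * gaussBallMass d) := by have := gaussBallMass_pos d; positivity
  refine ⟨c * (μ * gaussBallMass d), hmR, fun t ht x hx => ?_⟩
  have hball : ∀ y ∈ Metric.ball x (γ * √t), ‖y‖ ≤ R + γ * √T := fun y hy => by
    have hyx : ‖y - x‖ < γ * √t := by rwa [← dist_eq_norm, ← Metric.mem_ball]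
    have hsqrt : γ * √t ≤ γ * √T := by gcongr; exact ht.2
    calc ‖y‖ ≤ ‖y - x‖ + ‖x‖ := norm_le_norm_sub_add y x
      _ ≤ R + γ * √T := by linarith
  have hbound : ENNReal.ofReal (c * (μ * gaussBallMass d)) ≤ ENNReal.ofReal (ρ t x) := by
    rw [ENNReal.ofReal_mul hc.le]
    refine le_trans ?_ (hρlow t ht x)
    gcongr
    exact ofReal_mul_gaussBallMass_le_lintegral_gaussK_mul d hγ ht.1 hμ.le <|
      hρ₀μ.mono fun y hy hyB => hy (hball y hyB)
  exact (ENNReal.ofReal_le_ofReal_iff'.1 hbound).resolve_right hmR.not_ge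

/-- Propagation of local lower bounds by Gaussian lower bounds:
if `ρ₀ ≥ μ_R > 0` a.e. on every ball and
`ρ(t,x) ≥ c ∫ G^γ_t(x-x₀) ρ₀(x₀) dx₀`, then `ρ` is bounded below by a positive
constant `m_R` on `(0,T] × B(0,R)` for every `R > 0`. -/
theorem stmt_14 (d : ℕ) (hd : 1 ≤ d) (T c γ : ℝ)
    (hT : 0 < T) (hc : 0 < c) (hγ : 0 < γ)
    (ρ₀ : Euc d → ℝ) (hρ₀meas : Measurable ρ₀) (hρ₀nn : ∀ x, 0 ≤ ρ₀ x)
    (hρ₀low : ∀ R : ℝ, 0 < R → ∃ μR : ℝ, 0 < μR ∧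
      ∀ᵐ z ∂(volume : Measure (Euc d)), ‖z‖ ≤ R → μR ≤ ρ₀ z)
    (ρ : ℝ → Euc d → ℝ) (hρnn : ∀ t x, 0 ≤ ρ t x)
    (hρlow : ∀ t ∈ Set.Ioc (0:ℝ) T, ∀ x : Euc d,
      ENNReal.ofReal c * ∫⁻ y, ENNReal.ofReal (gaussK d γ t (x - y) * ρ₀ y)
        ≤ ENNReal.ofReal (ρ t x)) :
    ∀ R : ℝ, 0 < R → ∃ mR : ℝ, 0 < mR ∧
      ∀ t ∈ Set.Ioc (0:ℝ) T, ∀ x : Euc d, ‖x‖ ≤ R → mR ≤ ρ t x :=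
  stmt_14_general d T c γ hc hγ ρ₀ hρ₀low ρ hρlow
end
end
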